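/- Let N be a Nijenhuis operator on a BiHom-left-symmetric algebra (A,·,α,β) over a field K of characteristic zero. Then the deformed product x ·_N y = N(x)·y + x·N(y) − N(x·y) makes (A, ·_N, α, β) a BiHom-left-symmetric algebra, and N is a homomorphism of BiHom-left-symmetric algebras from (A, ·_N, α, β) to (A, ·, α, β). -/

import Mathlib

def IsLin (K : Type*) [Field K] {A B : Type*} [AddCommGroup A] [Module K A]
    [AddCommGroup B] [Module K B] (f : A → B) : Prop :=
  ∀ (c : K) (x y : A), f (c • x + y) = c • f x + f y

def IsBilin (K : Type*) [Field K] {A B C : Type*} [AddCommGroup A] [Module K A]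
    [AddCommGroup B] [Module K B] [AddCommGroup C] [Module K C] (f : A → B → C) : Prop :=
  (∀ (c : K) (x x' : A) (y : B), f (c • x + x') y = c • f x y + f x' y) ∧
  (∀ (c : K) (x : A) (y y' : B), f x (c • y + y') = c • f x y + f x y')

/-- A BiHom-Lie algebra structure: a bilinear bracket together with two commuting
multiplicative linear maps `α, β` satisfying BiHom-skew-symmetry and the BiHom-Jacobi
identity. -/
def IsBiHomLie (K : Type*) [Field K] {g : Type*} [AddCommGroup g] [Module K g]
    (br : g → g → g) (α β : g → g) : Prop :=
  IsBilin K br ∧ IsLin K α ∧ IsLin K β ∧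
  (∀ x, α (β x) = β (α x)) ∧
  (∀ x y, α (br x y) = br (α x) (α y)) ∧
  (∀ x y, β (br x y) = br (β x) (β y)) ∧
  (∀ x y, br (β x) (α y) = - br (β y) (α x)) ∧
  (∀ x y z, br (β (β x)) (br (β y) (α z)) + br (β (β y)) (br (β z) (α x))
      + br (β (β z)) (br (β x) (α y)) = 0)

/-- A BiHom-left-symmetric algebra structure: a bilinear product together with two
commuting multiplicative linear maps `α, β` satisfying the BiHom-left-symmetric identity. -/
def IsBiHomLS (K : Type*) [Field K] {A : Type*} [AddCommGroup A] [Module K A]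
    (mul : A → A → A) (α β : A → A) : Prop :=
  IsBilin K mul ∧ IsLin K α ∧ IsLin K β ∧
  (∀ x, α (β x) = β (α x)) ∧
  (∀ x y, α (mul x y) = mul (α x) (α y)) ∧
  (∀ x y, β (mul x y) = mul (β x) (β y)) ∧
  (∀ x y z,
    mul (mul (β x) (α y)) (α (β z)) - mul (α (β x)) (mul (α y) z)
      = mul (mul (β y) (α x)) (α (β z)) - mul (α (β y)) (mul (α x) z))

/-- A representation of a BiHom-Lie algebra `(g, br, α, β)` on `V` with respect to
commuting linear maps `φ, ψ`. -/
def IsBiHomLieRep (K : Type*) [Field K] {g V : Type*} [AddCommGroup g] [Module K g]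
    [AddCommGroup V] [Module K V] (br : g → g → g) (α β : g → g)
    (ρ : g → V →ₗ[K] V) (φ ψ : V →ₗ[K] V) : Prop :=
  IsLin K ρ ∧ (∀ v, φ (ψ v) = ψ (φ v)) ∧
  (∀ x, ρ (α x) ∘ₗ φ = φ ∘ₗ ρ x) ∧
  (∀ x, ρ (β x) ∘ₗ ψ = ψ ∘ₗ ρ x) ∧
  (∀ x y, ρ (br (β x) y) ∘ₗ ψ = ρ (α (β x)) ∘ₗ ρ y - ρ (β y) ∘ₗ ρ (α x))

/-- A representation `(V, L, R, φ, ψ)` of a BiHom-left-symmetric algebra `(A, mul, α, β)`. -/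
def IsBiHomLSRep (K : Type*) [Field K] {A V : Type*} [AddCommGroup A] [Module K A]
    [AddCommGroup V] [Module K V] (mul : A → A → A) (α β : A → A)
    (L R : A → V →ₗ[K] V) (φ ψ : V →ₗ[K] V) : Prop :=
  IsLin K L ∧ IsLin K R ∧ (∀ v, φ (ψ v) = ψ (φ v)) ∧
  (∀ x, φ ∘ₗ L x = L (α x) ∘ₗ φ) ∧
  (∀ x, ψ ∘ₗ L x = L (β x) ∘ₗ ψ) ∧
  (∀ x, φ ∘ₗ R x = R (α x) ∘ₗ φ) ∧
  (∀ x, ψ ∘ₗ R x = R (β x) ∘ₗ ψ) ∧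
  (∀ x y, L (mul (β x) (α y)) ∘ₗ ψ - L (α (β x)) ∘ₗ L (α y)
      = L (mul (β y) (α x)) ∘ₗ ψ - L (α (β y)) ∘ₗ L (α x)) ∧
  (∀ x y, R (β x) ∘ₗ L (β y) ∘ₗ φ - L (α (β y)) ∘ₗ R x ∘ₗ φ
      = R (β x) ∘ₗ R (α y) ∘ₗ ψ - R (mul (α y) x) ∘ₗ φ ∘ₗ ψ)

/-!
Expanding the BiHom associator of the deformed product `·_N` by bilinearity and the Nijenhuis
identity writes it as `D(Nx,Ny,z) + D(Nx,y,Nz) + D(x,Ny,Nz) + N(N D(x,y,z)) - N D(Nx,y,z)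
- N D(x,Ny,z) - N D(x,y,Nz)` in terms of the associator `D` of `·`. Since `D` is symmetric in
its first two arguments, so is this expression, which is the left-symmetric identity for `·_N`.
-/

section NijenhuisDeformation

variable {K : Type*} [Field K] {A : Type*} [AddCommGroup A] [Module K A]

namespace IsLin

variable {f : A → A}

theorem map_add (hf : IsLin K f) (x y : A) : f (x + y) = f x + f y := by
  simpa using hf 1 x y

theorem map_sub (hf : IsLin K f) (x y : A) : f (x - y) = f x - f y := by
  have h := hf (-1) y x
  rwa [neg_one_smul, neg_one_smul, ← sub_eq_neg_add, ← sub_eq_neg_add] at h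

end IsLin

namespace IsBilin

variable {mul : A → A → A}

theorem isLin_left (hmul : IsBilin K mul) (y : A) : IsLin K (mul · y) :=
  fun c x x' => hmul.1 c x x' y

theorem isLin_right (hmul : IsBilin K mul) (x : A) : IsLin K (mul x) :=
  fun c y y' => hmul.2 c x y y'

end IsBilin

def nijenhuisDeform (mul : A → A → A) (N : A → A) (x y : A) : A :=
  mul (N x) y + mul x (N y) - N (mul x y)

/-- `IsBiHomLS` asks exactly that this is symmetric in `x` and `y`. -/
def biHomAssociator (mul : A → A → A) (α β : A → A) (x y z : A) : A :=
  mul (mul (β x) (α y)) (α (β z)) - mul (α (β x)) (mul (α y) z)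

variable {mul : A → A → A} {N : A → A}

theorem isBilin_nijenhuisDeform (hmul : IsBilin K mul) (hN : IsLin K N) :
    IsBilin K (nijenhuisDeform mul N) := by
  constructor
  · intro c x x' y
    simp only [nijenhuisDeform, hN c, hmul.1]
    module
  · intro c x y y'
    simp only [nijenhuisDeform, hN c, hmul.2]
    module

theorem map_nijenhuisDeform {f : A → A} (hf : IsLin K f)
    (hfmul : ∀ x y, f (mul x y) = mul (f x) (f y)) (hNf : ∀ x, N (f x) = f (N x)) (x y : A) :
    f (nijenhuisDeform mul N x y) = nijenhuisDeform mul N (f x) (f y) := by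
  simp only [nijenhuisDeform, hf.map_add, hf.map_sub, ← hNf, hfmul]

theorem biHomAssociator_nijenhuisDeform {α β : A → A} (hmul : IsBilin K mul) (hN : IsLin K N)
    (hNα : ∀ x, N (α x) = α (N x)) (hNβ : ∀ x, N (β x) = β (N x))
    (hNij : ∀ x y, mul (N x) (N y) = N (nijenhuisDeform mul N x y)) (x y z : A) :
    biHomAssociator (nijenhuisDeform mul N) α β x y z =
      biHomAssociator mul α β (N x) (N y) z + biHomAssociator mul α β (N x) y (N z)
        + biHomAssociator mul α β x (N y) (N z) + N (N (biHomAssociator mul α β x y z))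
        - N (biHomAssociator mul α β (N x) y z) - N (biHomAssociator mul α β x (N y) z)
        - N (biHomAssociator mul α β x y (N z)) := by
  have addL := fun b => (hmul.isLin_left b).map_add
  have subL := fun b => (hmul.isLin_left b).map_sub
  have addR := fun a => (hmul.isLin_right a).map_add
  have subR := fun a => (hmul.isLin_right a).map_sub
  simp only [nijenhuisDeform] at hNij
  simp only [biHomAssociator, nijenhuisDeform]
  rw [← hNij (β x) (α y), ← hNij (α y) z]
  simp only [addL, subL, addR, subR]
  rw [hNij (mul (β x) (α y)) (α (β z)), hNij (α (β x)) (mul (α y) z)]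
  simp only [hN.map_add, hN.map_sub, hNα, hNβ]
  abel

theorem isBiHomLS_nijenhuisDeform {α β : A → A} (halg : IsBiHomLS K mul α β) (hN : IsLin K N)
    (hNα : ∀ x, N (α x) = α (N x)) (hNβ : ∀ x, N (β x) = β (N x))
    (hNij : ∀ x y, mul (N x) (N y) = N (nijenhuisDeform mul N x y)) :
    IsBiHomLS K (nijenhuisDeform mul N) α β := by
  obtain ⟨hmul, hα, hβ, hαβ, hαmul, hβmul, hLS⟩ := halg
  have hD : ∀ x y z, biHomAssociator mul α β x y z = biHomAssociator mul α β y x z := hLS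
  refine ⟨isBilin_nijenhuisDeform hmul hN, hα, hβ, hαβ, map_nijenhuisDeform hα hαmul hNα,
    map_nijenhuisDeform hβ hβmul hNβ, fun x y z => ?_⟩
  change biHomAssociator (nijenhuisDeform mul N) α β x y z =
    biHomAssociator (nijenhuisDeform mul N) α β y x z
  rw [biHomAssociator_nijenhuisDeform hmul hN hNα hNβ hNij,
    biHomAssociator_nijenhuisDeform hmul hN hNα hNβ hNij, hD (N x) (N y) z, hD (N x) y (N z),
    hD x (N y) (N z), hD x y z, hD (N x) y z, hD x (N y) z, hD x y (N z)]
  abel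

end NijenhuisDeformation

theorem stmt16_general (K : Type*) [Field K]
    {A : Type*} [AddCommGroup A] [Module K A]
    (mul : A → A → A) (α β : A → A)
    (halg : IsBiHomLS K mul α β)
    (N : A → A) (hN : IsLin K N)
    (hNα : ∀ x, N (α x) = α (N x)) (hNβ : ∀ x, N (β x) = β (N x))
    (hNij : ∀ x y, mul (N x) (N y) = N (mul (N x) y + mul x (N y) - N (mul x y))) :
    IsBiHomLS K (fun x y => mul (N x) y + mul x (N y) - N (mul x y)) α β ∧
    IsLin K N ∧
    (∀ x y, N (mul (N x) y + mul x (N y) - N (mul x y)) = mul (N x) (N y)) ∧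
    (∀ x, N (α x) = α (N x)) ∧ (∀ x, N (β x) = β (N x)) :=
  ⟨isBiHomLS_nijenhuisDeform halg hN hNα hNβ hNij, hN, fun x y => (hNij x y).symm, hNα, hNβ⟩

/-- for a Nijenhuis operator `N` on a BiHom-left-symmetric algebra
`(A, ·, α, β)`, the deformed product `x ·_N y = N(x)·y + x·N(y) − N(x·y)` makes
`(A, ·_N, α, β)` a BiHom-left-symmetric algebra and `N` is a homomorphism from
`(A, ·_N, α, β)` to `(A, ·, α, β)`. -/
theorem stmt16 (K : Type*) [Field K] [CharZero K]
    {A : Type*} [AddCommGroup A] [Module K A]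
    (mul : A → A → A) (α β : A → A)
    (halg : IsBiHomLS K mul α β)
    (N : A → A) (hN : IsLin K N)
    (hNα : ∀ x, N (α x) = α (N x)) (hNβ : ∀ x, N (β x) = β (N x))
    (hNij : ∀ x y, mul (N x) (N y) = N (mul (N x) y + mul x (N y) - N (mul x y))) :
    IsBiHomLS K (fun x y => mul (N x) y + mul x (N y) - N (mul x y)) α β ∧
    IsLin K N ∧
    (∀ x y, N (mul (N x) y + mul x (N y) - N (mul x y)) = mul (N x) (N y)) ∧
    (∀ x, N (α x) = α (N x)) ∧ (∀ x, N (β x) = β (N x)) :=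
  stmt16_general K mul α β halg N hN hNα hNβ hNij
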